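/- arXiv:1307.5345 — 5 statements merged into one kernel-verified Lean document; each statement's English description precedes it below -/
import Mathlib

section
/- Let f : F → G be a b-bicontrolled surjective homomorphism of X-filtered R-modules over a metric space X. If F is δ-split and G is d-insular, then the kernel K of f, with the standard filtration K(S) = K ∩ F(S), is (δ + 2b + d)-split. -/
open Metric Set

/-- The `b`-enlargement of a subset `S` of a metric space. -/
def enl {X : Type*} [MetricSpace X] (S : Set X) (b : ℝ) : Set X :=
  {x | ∃ s ∈ S, dist x s ≤ b}

lemma enl_mono_left {X : Type*} [MetricSpace X] {S T : Set X} (h : S ⊆ T) (b : ℝ) :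
    enl S b ⊆ enl T b := fun _ ⟨s, hs, hd⟩ => ⟨s, h hs, hd⟩

lemma enl_mono_rad {X : Type*} [MetricSpace X] (S : Set X) {a b : ℝ} (h : a ≤ b) :
    enl S a ⊆ enl S b := fun _ ⟨s, hs, hd⟩ => ⟨s, hs, hd.trans h⟩

lemma enl_enl {X : Type*} [MetricSpace X] (S : Set X) (a b : ℝ) :
    enl (enl S a) b ⊆ enl S (b + a) := fun x ⟨y, ⟨s, hs, h1⟩, h2⟩ =>
  ⟨s, hs, (dist_triangle x y s).trans (add_le_add h2 h1)⟩

/-- Given a `b`-bicontrolled epimorphism `f : F → G` with `F` `δ`-split and `G`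
`d`-insular, the kernel of `f` with the standard filtration is `(δ + 2b + d)`-split. -/
theorem kernel_split {X : Type*} [MetricSpace X] {R : Type*} [Ring R]
    {M N : Type*} [AddCommGroup M] [Module R M] [AddCommGroup N] [Module R N]
    (F : Set X → Submodule R M) (G : Set X → Submodule R N)
    (hFmono : Monotone F) (hGmono : Monotone G)
    (hFempty : F ∅ = ⊥) (hGempty : G ∅ = ⊥)
    (f : M →ₗ[R] N) (hsurj : Function.Surjective f)
    (b δ d : ℝ) (hb : 0 ≤ b) (hδ : 0 ≤ δ) (hd : 0 ≤ d)
    (hctrl : ∀ S : Set X, (F S).map f ≤ G (enl S b))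
    (hbictrl : ∀ S : Set X, LinearMap.range f ⊓ G S ≤ (F (enl S b)).map f)
    (hsplit : ∀ U₁ U₂ : Set X, F (U₁ ∪ U₂) ≤ F (enl U₁ δ) ⊔ F (enl U₂ δ))
    (hins : ∀ U₁ U₂ : Set X, G U₁ ⊓ G U₂ ≤ G (enl U₁ d ∩ enl U₂ d)) :
    ∀ U₁ U₂ : Set X,
      LinearMap.ker f ⊓ F (U₁ ∪ U₂) ≤
        (LinearMap.ker f ⊓ F (enl U₁ (δ + 2 * b + d))) ⊔
          (LinearMap.ker f ⊓ F (enl U₂ (δ + 2 * b + d))) := by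
  intro U₁ U₂ x hx
  obtain ⟨hxk, hxF⟩ := hx
  obtain ⟨x₁, hx₁, x₂, hx₂, hsum⟩ := Submodule.mem_sup.1 (hsplit U₁ U₂ hxF)
  have hfx : f x = 0 := LinearMap.mem_ker.1 hxk
  -- f x₁ ∈ G (enl U₁ (b+δ)), f x₂ ∈ G (enl U₂ (b+δ))
  have hf1 : f x₁ ∈ G (enl U₁ (b + δ)) :=
    hGmono (enl_enl U₁ δ b) (hctrl _ ⟨x₁, hx₁, rfl⟩)
  have hf2 : f x₂ ∈ G (enl U₂ (b + δ)) :=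
    hGmono (enl_enl U₂ δ b) (hctrl _ ⟨x₂, hx₂, rfl⟩)
  have hfx1x2 : f x₁ = -f x₂ := by
    have h : f x₁ + f x₂ = 0 := by rw [← map_add, hsum, hfx]
    exact eq_neg_of_add_eq_zero_left h
  have hf2' : f x₁ ∈ G (enl U₂ (b + δ)) := by
    rw [hfx1x2]; exact neg_mem hf2
  set S : Set X := enl (enl U₁ (b + δ)) d ∩ enl (enl U₂ (b + δ)) d with hS
  have hfS : f x₁ ∈ G S := hins _ _ ⟨hf1, hf2'⟩
  obtain ⟨y, hy, hfy⟩ := hbictrl S ⟨⟨x₁, rfl⟩, hfS⟩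
  have hrad : b + (d + (b + δ)) ≤ δ + 2 * b + d := by linarith
  have hy1 : y ∈ F (enl U₁ (δ + 2 * b + d)) := by
    refine hFmono ?_ hy
    refine (enl_mono_left (Set.inter_subset_left) b).trans ?_
    refine (enl_mono_left (enl_enl U₁ (b + δ) d) b).trans ?_
    exact (enl_enl U₁ (d + (b + δ)) b).trans (enl_mono_rad U₁ hrad)
  have hy2 : y ∈ F (enl U₂ (δ + 2 * b + d)) := by
    refine hFmono ?_ hy
    refine (enl_mono_left (Set.inter_subset_right) b).trans ?_
    refine (enl_mono_left (enl_enl U₂ (b + δ) d) b).trans ?_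
    exact (enl_enl U₂ (d + (b + δ)) b).trans (enl_mono_rad U₂ hrad)
  have hrad' : δ ≤ δ + 2 * b + d := by linarith
  have hx1' : x₁ ∈ F (enl U₁ (δ + 2 * b + d)) :=
    hFmono (enl_mono_rad U₁ hrad') hx₁
  have hx2' : x₂ ∈ F (enl U₂ (δ + 2 * b + d)) :=
    hFmono (enl_mono_rad U₂ hrad') hx₂
  refine Submodule.mem_sup.2 ⟨x₁ - y, ⟨?_, sub_mem hx1' hy1⟩, x₂ + y, ⟨?_, add_mem hx2' hy2⟩, by rw [← hsum]; abel⟩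
  · simp [LinearMap.mem_ker, map_sub, hfy]
  · simp [LinearMap.mem_ker, map_add, hfy, hfx1x2]
end

section
/- Let f : F → G be a b-controlled homomorphism of X-filtered R-modules, where F is D-lean and G is d-insular. Let {U_α} be a (2D + 2b + 2d)-disjoint collection of subsets of X and U its union. Then K(U) ⊆ Σ_α K(U_α[D]), where K is the kernel of f with the standard filtration. -/
open Metric Set

/-- A collection is `r`-disjoint if each member's `r`-enlargement misses the
union of the others. -/
def RDisj {X : Type*} [MetricSpace X] {ι : Type*} (r : ℝ) (S : ι → Set X) : Prop :=
  ∀ α, enl (S α) r ∩ (⋃ β ∈ {β | β ≠ α}, S β) = ∅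

/-- For a `b`-controlled map `f : F → G` with `F` `D`-lean and `G` `d`-insular,
and a `(2D + 2b + 2d)`-disjoint collection `{U α}` with union `U`, the kernel
satisfies `K(U) ⊆ Σ_α K(U_α[D])`. -/
theorem kernel_lean_on_disjoint_union {X : Type*} [MetricSpace X] {R : Type*} [Ring R]
    {M N : Type*} [AddCommGroup M] [Module R M] [AddCommGroup N] [Module R N]
    (F : Set X → Submodule R M) (G : Set X → Submodule R N)
    (hFmono : Monotone F) (hGmono : Monotone G)
    (hFempty : F ∅ = ⊥) (hGempty : G ∅ = ⊥)
    (f : M →ₗ[R] N)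
    (b D d : ℝ) (hb : 0 ≤ b) (hD : 0 ≤ D) (hd : 0 ≤ d)
    (hctrl : ∀ S : Set X, (F S).map f ≤ G (enl S b))
    (hlean : ∀ U : Set X, F U ≤ ⨆ x ∈ U, F (closedBall x D))
    (hins : ∀ U₁ U₂ : Set X, G U₁ ⊓ G U₂ ≤ G (enl U₁ d ∩ enl U₂ d))
    {ι : Type*} (U : ι → Set X)
    (hdisj : RDisj (2 * D + 2 * b + 2 * d) U) :
    LinearMap.ker f ⊓ F (⋃ α, U α) ≤ ⨆ α, LinearMap.ker f ⊓ F (enl (U α) D) := by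
  classical
  rintro z ⟨hzker, hzF⟩
  have hz0 : f z = 0 := hzker
  -- Step 1: decompose z over the pieces F (enl (U α) D).
  have h1 : z ∈ ⨆ α, F (enl (U α) D) := by
    have h := hlean _ hzF
    have hle : (⨆ x ∈ ⋃ α, U α, F (closedBall x D)) ≤ ⨆ α, F (enl (U α) D) := by
      refine iSup_le fun x => iSup_le fun hx => ?_
      obtain ⟨_, ⟨α, rfl⟩, hxα⟩ := hx
      refine le_trans ?_ (le_iSup _ α)
      apply hFmono
      intro y hy
      exact ⟨x, hxα, by simpa [dist_comm] using hy⟩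
    exact hle h
  rw [Submodule.mem_iSup_iff_exists_finsupp] at h1
  obtain ⟨c, hc, hsum⟩ := h1
  -- sum of images
  have hfsum : ∑ β ∈ c.support, f (c β) = 0 := by
    have : f (c.sum fun _ v => v) = 0 := by rw [hsum]; exact hz0
    simpa [Finsupp.sum, map_sum] using this
  -- Step 2: each piece is in the kernel.
  have hkey : ∀ α, f (c α) = 0 := by
    intro α
    by_cases hα : c α = 0
    · simp [hα]
    have hmem : α ∈ c.support := Finsupp.mem_support_iff.mpr hα
    set A : Set X := enl (enl (U α) D) b with hA
    set W : Set X := ⋃ β ∈ {β | β ≠ α}, enl (U β) D with hW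
    set B : Set X := enl W b with hB
    have hfA : f (c α) ∈ G A := hctrl _ ⟨c α, hc α, rfl⟩
    have hfB : f (c α) ∈ G B := by
      have h2 : f (c α) + ∑ β ∈ c.support.erase α, f (c β) = 0 := by
        rw [Finset.add_sum_erase _ (fun β => f (c β)) hmem]; exact hfsum
      have heq : f (c α) = -∑ β ∈ c.support.erase α, f (c β) :=
        eq_neg_of_add_eq_zero_left h2
      rw [heq]
      refine neg_mem (Submodule.sum_mem _ fun β hβ => ?_)
      have hβα : β ≠ α := (Finset.mem_erase.mp hβ).1
      have : f (c β) ∈ G (enl (enl (U β) D) b) := hctrl _ ⟨c β, hc β, rfl⟩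
      refine hGmono ?_ this
      intro y hy
      obtain ⟨w, hw, hdy⟩ := hy
      exact ⟨w, mem_biUnion hβα hw, hdy⟩
    -- the two enlarged supports are disjoint
    have hempty : enl A d ∩ enl B d = ∅ := by
      rw [Set.eq_empty_iff_forall_notMem]
      rintro x ⟨⟨a, ⟨a', ⟨s, hs, hds⟩, hda⟩, hdxa⟩, ⟨u, ⟨w, hw, hdu⟩, hdxu⟩⟩
      obtain ⟨_, ⟨β, rfl⟩, hwβ⟩ := hw
      simp only [Set.mem_iUnion] at hwβ
      obtain ⟨hβα, t, ht, hdwt⟩ := hwβ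
      have hts : dist t s ≤ 2 * D + 2 * b + 2 * d := by
        have h1 : dist x s ≤ D + b + d :=
          (dist_triangle4 x a a' s).trans (by linarith)
        have h2 : dist x t ≤ D + b + d :=
          (dist_triangle4 x u w t).trans (by linarith)
        calc dist t s ≤ dist t x + dist x s := dist_triangle _ _ _
          _ ≤ (D + b + d) + (D + b + d) := by rw [dist_comm t x]; linarith
          _ = 2 * D + 2 * b + 2 * d := by ring
      have htmem : t ∈ enl (U α) (2 * D + 2 * b + 2 * d) ∩ ⋃ β ∈ {β | β ≠ α}, U β :=
        ⟨⟨s, hs, hts⟩, mem_biUnion hβα ht⟩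
      rw [hdisj α] at htmem
      exact htmem
    have : f (c α) ∈ G (enl A d ∩ enl B d) := hins A B ⟨hfA, hfB⟩
    rw [hempty, hGempty] at this
    simpa using this
  -- Step 3: conclude.
  rw [Submodule.mem_iSup_iff_exists_finsupp]
  exact ⟨c, fun α => ⟨hkey α, hc α⟩, hsum⟩
end

section
/- If a family of metric subspaces X is R-decomposable over a family Y (each member of X is a union of two R-disjoint subfamilies of members of Y), then for any D with 2D < R, the family of D-enlargements {U[D] : U ∈ X, taken inside a common ambient metric space} is (R − 2D)-decomposable over the family of D-enlargements of members of Y. -/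
open Metric Set

/-- A collection of subsets (given as a set of sets) is `r`-disjoint if each
member's `r`-enlargement misses the union of the other members. -/
def SetRDisjoint {X : Type*} [MetricSpace X] (r : ℝ) (I : Set (Set X)) : Prop :=
  ∀ S ∈ I, enl S r ∩ ⋃₀ (I \ {S}) = ∅

/-- A family `A` is `r`-decomposable over a family `B` if every member of `A`
is the union of two `r`-disjoint subcollections of members of `B`. -/
def Decomp {X : Type*} [MetricSpace X] (r : ℝ) (A B : Set (Set X)) : Prop :=
  ∀ Y ∈ A, ∃ I J : Set (Set X), I ⊆ B ∧ J ⊆ B ∧ Y = ⋃₀ I ∪ ⋃₀ J ∧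
    SetRDisjoint r I ∧ SetRDisjoint r J

section Enlargement

variable {X : Type*} [MetricSpace X]

lemma enl_union (S T : Set X) (D : ℝ) : enl (S ∪ T) D = enl S D ∪ enl T D := by
  ext x
  simp only [enl, mem_union, mem_ofPred_eq, or_and_right, exists_or]

lemma enl_sUnion (I : Set (Set X)) (D : ℝ) :
    enl (⋃₀ I) D = ⋃₀ ((fun S => enl S D) '' I) := by
  ext x
  simp only [enl, mem_sUnion, sUnion_image, mem_iUnion, mem_ofPred_eq, exists_prop]
  grind

lemma SetRDisjoint.image_enl {I : Set (Set X)} {R : ℝ} (D : ℝ) (hI : SetRDisjoint R I) :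
    SetRDisjoint (R - 2 * D) ((fun S => enl S D) '' I) := by
  rintro _ ⟨S, hS, rfl⟩
  refine eq_empty_iff_forall_notMem.2 ?_
  rintro x ⟨⟨s', ⟨s, hs, hs's⟩, hxs'⟩, _, ⟨⟨T, hT, rfl⟩, hne⟩, t, ht, hxt⟩
  have hTS : T ≠ S := fun h => hne (h ▸ rfl)
  have hts : dist t s ≤ R :=
    calc dist t s ≤ dist t x + dist x s' + dist s' s := dist_triangle4 t x s' s
      _ ≤ D + (R - 2 * D) + D := by rw [dist_comm t x]; gcongr
      _ = R := by ring
  exact eq_empty_iff_forall_notMem.1 (hI S hS) t ⟨⟨s, hs, hts⟩, T, ⟨hT, hTS⟩, ht⟩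

end Enlargement

theorem decomp_enlarge_general {X : Type*} [MetricSpace X] (A B : Set (Set X))
    (R D : ℝ) (h : Decomp R A B) :
    Decomp (R - 2 * D) ((fun S => enl S D) '' A) ((fun S => enl S D) '' B) := by
  rintro _ ⟨Y, hY, rfl⟩
  obtain ⟨I, J, hIB, hJB, rfl, hI, hJ⟩ := h Y hY
  exact ⟨_, _, image_mono hIB, image_mono hJB,
    (enl_union _ _ D).trans (by rw [enl_sUnion, enl_sUnion]), hI.image_enl D, hJ.image_enl D⟩

/-- If a family `A` is `R`-decomposable over `B`, then for `2D < R` the family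
of `D`-enlargements of members of `A` is `(R - 2D)`-decomposable over the family
of `D`-enlargements of members of `B`. -/
theorem decomp_enlarge {X : Type*} [MetricSpace X] (A B : Set (Set X))
    (R D : ℝ) (hD : 0 ≤ D) (hRD : 2 * D < R) (h : Decomp R A B) :
    Decomp (R - 2 * D) ((fun S => enl S D) '' A) ((fun S => enl S D) '' B) :=
  decomp_enlarge_general A B R D h
end

section
/- Finite decomposition complexity implies straight finite decomposition complexity: if the second player has a winning strategy in the decomposition game over X (for every sequence of challenges R₁, R₂, ... chosen adaptively by the first player, the second player can produce successive decompositions ending in a bounded family), then for every fixed sequence R₁ ≤ R₂ ≤ ... there exist families V₁, ..., Vₙ with {X} R₁-decomposable over V₁, Vᵢ R_{i+1}-decomposable over V_{i+1}, and Vₙ bounded. -/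
open Metric Set

/-- A family of subsets is uniformly bounded. -/
def BddFam {X : Type*} [MetricSpace X] (A : Set (Set X)) : Prop :=
  ∃ m : ℝ, ∀ S ∈ A, Metric.diam S ≤ m

/-- The history of challenges `Rs 0, …, Rs n` as a list. -/
def hist (Rs : ℕ → ℝ) (n : ℕ) : List ℝ :=
  List.ofFn (fun j : Fin (n + 1) => Rs j)

/-- `X` has finite decomposition complexity: the second player has a winning
strategy `s` in the decomposition game — a function of the history of
challenges producing, along every play with positive challenges, successive
decompositions starting from `{X}` and eventually reaching a bounded family. -/
def FDC (X : Type*) [MetricSpace X] : Prop :=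
  ∃ s : List ℝ → Set (Set X),
    ∀ Rs : ℕ → ℝ, (∀ i, 0 < Rs i) →
      Decomp (Rs 0) {(Set.univ : Set X)} (s (hist Rs 0)) ∧
      (∀ i : ℕ, Decomp (Rs (i + 1)) (s (hist Rs i)) (s (hist Rs (i + 1)))) ∧
      (∃ n : ℕ, BddFam (s (hist Rs n)))

/-- `X` has straight finite decomposition complexity. -/
def sFDC (X : Type*) [MetricSpace X] : Prop :=
  ∀ Rs : ℕ → ℝ, (∀ i, 0 < Rs i) → Monotone Rs →
    ∃ (n : ℕ) (V : ℕ → Set (Set X)),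
      Decomp (Rs 0) {Set.univ} (V 0) ∧
      (∀ i < n, Decomp (Rs (i + 1)) (V i) (V (i + 1))) ∧
      BddFam (V n)

/-- Finite decomposition complexity implies straight finite decomposition
complexity. -/
theorem FDC_implies_sFDC {X : Type*} [MetricSpace X] (h : FDC X) : sFDC X := by
  obtain ⟨s, hs⟩ := h
  intro Rs hpos _
  obtain ⟨h0, hstep, n, hb⟩ := hs Rs hpos
  exact ⟨n, fun i => s (hist Rs i), h0, fun i _ => hstep i, hb⟩
end

section
/- Let f : F → G be a b-bicontrolled homomorphism of X-filtered modules with F D-lean. Then the image I = f(F) with the standard filtration I(S) = I ∩ G(S) is (D + 2b)-lean. -/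
open Metric Set

/-- The image of a `b`-bicontrolled homomorphism out of a `D`-lean filtered
module, with the standard filtration, is `(D + 2b)`-lean. -/
theorem image_lean {X : Type*} [MetricSpace X] {R : Type*} [Ring R]
    {M N : Type*} [AddCommGroup M] [Module R M] [AddCommGroup N] [Module R N]
    (F : Set X → Submodule R M) (G : Set X → Submodule R N)
    (hFmono : Monotone F) (hGmono : Monotone G)
    (hFempty : F ∅ = ⊥) (hGempty : G ∅ = ⊥)
    (f : M →ₗ[R] N)
    (b D : ℝ) (hb : 0 ≤ b) (hD : 0 ≤ D)
    (hctrl : ∀ S : Set X, (F S).map f ≤ G (enl S b))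
    (hbictrl : ∀ S : Set X, LinearMap.range f ⊓ G S ≤ (F (enl S b)).map f)
    (hlean : ∀ U : Set X, F U ≤ ⨆ x ∈ U, F (closedBall x D)) :
    ∀ U : Set X, LinearMap.range f ⊓ G U ≤
      ⨆ x ∈ U, LinearMap.range f ⊓ G (closedBall x (D + 2 * b)) := by
  intro U
  refine le_trans (hbictrl U) ?_
  refine le_trans (Submodule.map_mono (hlean (enl U b))) ?_
  rw [Submodule.map_iSup]
  refine iSup_le fun x => ?_
  rw [Submodule.map_iSup]
  refine iSup_le fun hx => ?_
  obtain ⟨u, hu, hxu⟩ := hx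
  refine le_trans ?_ (le_iSup_of_le u (le_iSup_of_le hu le_rfl))
  refine le_inf (le_trans (Submodule.map_mono le_top) (by rw [Submodule.map_top])) ?_
  refine le_trans (hctrl _) (hGmono ?_)
  rintro z ⟨s, hs, hzs⟩
  have : dist s x ≤ D := hs
  simp only [mem_closedBall]
  calc dist z u ≤ dist z s + dist s x + dist x u := dist_triangle4 z s x u
    _ ≤ b + D + b := by gcongr
    _ = D + 2 * b := by ring
end
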